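/- Let X = (x_1 ≥ … ≥ x_N) and Y = (y_1 ≥ … ≥ y_N) be 0-dimensional persistence diagrams with the same number N ≥ 2 of points. If ζ < max(x_l, y_l)/2 < max(Z), then d_B(X,Y) = max(x_l, y_l)/2. -/

import Mathlib

open Classical in
/-- Penalty of each point of the two diagrams under a partial matching `f`:
a point `x i` matched to `y j` incurs `|x i - y j|`; an unmatched `x i`
(matched to the diagonal) incurs `x i / 2`; an unmatched `y j` incurs `y j / 2`
(a `y j` in the range of `f` is already accounted for, so it incurs `0`). -/
noncomputable def diagPenalty {N M : ℕ} (x : Fin N → ℝ) (y : Fin M → ℝ)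
    (f : Fin N → Option (Fin M)) : Fin N ⊕ Fin M → ℝ
  | Sum.inl i => (f i).elim (x i / 2) (fun j => |x i - y j|)
  | Sum.inr j => if ∃ i, f i = some j then 0 else y j / 2

/-- The cost of a partial matching: the maximum of `|x i - y j|` over matched
pairs, of `x i / 2` over unmatched `i`, and of `y j / 2` over unmatched `j`. -/
noncomputable def matchCost {N M : ℕ} (x : Fin N → ℝ) (y : Fin M → ℝ)
    (f : Fin N → Option (Fin M)) : ℝ :=
  ⨆ k, diagPenalty x y f k

/-- `f : Fin N → Option (Fin M)` is a partial matching when it is injective on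
matched indices, i.e. it induces a bijection between a subset of `Fin N` and a
subset of `Fin M`. -/
def IsPartialMatching {N M : ℕ} (f : Fin N → Option (Fin M)) : Prop :=
  ∀ i i' j, f i = some j → f i' = some j → i = i'

/-- The bottleneck distance between two 0-dimensional persistence diagrams,
given by their (decreasing) sequences of death times: the minimum cost over
all partial matchings. -/
noncomputable def bottleneck {N M : ℕ} (x : Fin N → ℝ) (y : Fin M → ℝ) : ℝ :=
  ⨅ f : {f : Fin N → Option (Fin M) // IsPartialMatching f}, matchCost x y f.1

/-!
Let `M = max (x l) (y l)`; by symmetry say `M = x l`, so that `|x l - y l| > M / 2` forces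
`y l < M / 2`. Leaving `x l` and `y l` on the diagonal and matching every other pair
`x i ↔ y i` costs at most `max ζ (M / 2) = M / 2`. Conversely, in a matching of cost `< M / 2`
each of the `l + 1` points `x i` with `i ≤ l` (all `≥ M`) must be matched to some `y j` with
`y j > x i - M / 2 ≥ M / 2 > y l`, hence with `j < l`: there are only `l` such points.
-/

open Finset

section General

variable {N M : ℕ} {x : Fin N → ℝ} {y : Fin M → ℝ} {f : Fin N → Option (Fin M)}

theorem diagPenalty_inl_of_eq_none {i : Fin N} (h : f i = none) :
    diagPenalty x y f (.inl i) = x i / 2 := by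
  simp [diagPenalty, h]

theorem diagPenalty_inl_of_eq_some {i : Fin N} {j : Fin M} (h : f i = some j) :
    diagPenalty x y f (.inl i) = |x i - y j| := by
  simp [diagPenalty, h]

theorem diagPenalty_inr_of_exists {j : Fin M} (h : ∃ i, f i = some j) :
    diagPenalty x y f (.inr j) = 0 := by
  simp [diagPenalty, h]

theorem diagPenalty_inr_of_not_exists {j : Fin M} (h : ¬∃ i, f i = some j) :
    diagPenalty x y f (.inr j) = y j / 2 := by
  simp only [diagPenalty, if_neg h]

theorem diagPenalty_le_matchCost (k : Fin N ⊕ Fin M) : diagPenalty x y f k ≤ matchCost x y f :=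
  le_ciSup (Set.finite_range _).bddAbove k

namespace IsPartialMatching

theorem card_le_of_forall_exists_mem (hf : IsPartialMatching f) {s : Finset (Fin N)}
    {t : Finset (Fin M)} (h : ∀ i ∈ s, ∃ j ∈ t, f i = some j) : #s ≤ #t := by
  calc #s ≤ #(t.map .some) := by
        refine card_le_card_of_injOn f (fun i hi => ?_) fun i hi i' _ hii' => ?_
        · obtain ⟨j, hj, hij⟩ := h i hi
          simpa [hij] using hj
        · obtain ⟨j, -, hij⟩ := h i hi
          exact hf i i' j hij (hii' ▸ hij)
    _ = #t := card_map _

theorem partialInv_eq_some_iff (hf : IsPartialMatching f) {i : Fin N} {j : Fin M} :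
    Function.partialInv f (some j) = some i ↔ f i = some j := by
  classical
  rw [Function.partialInv]
  split_ifs with h
  · exact ⟨fun e => Option.some_injective _ e ▸ h.choose_spec,
      fun e => congrArg some (hf _ _ j h.choose_spec e)⟩
  · exact ⟨fun e => (nomatch e), fun e => (h ⟨i, e⟩).elim⟩

theorem partialInv (hf : IsPartialMatching f) :
    IsPartialMatching fun j => Function.partialInv f (some j) :=
  fun _ _ _ hj hj' => Option.some_injective _ <|
    ((hf.partialInv_eq_some_iff.mp hj).symm.trans (hf.partialInv_eq_some_iff.mp hj'))

end IsPartialMatching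

theorem matchCost_partialInv_le (hf : IsPartialMatching f) :
    matchCost y x (fun j => Function.partialInv f (some j)) ≤ matchCost x y f := by
  rcases isEmpty_or_nonempty (Fin M ⊕ Fin N) with _ | _
  · have : IsEmpty (Fin N ⊕ Fin M) := (Equiv.sumComm _ _).isEmpty
    simp [matchCost]
  refine ciSup_mono_of_forall_exists (Set.finite_range _).bddAbove ?_
  have hinv := @hf.partialInv_eq_some_iff
  rintro (j | i)
  · rcases hj : Function.partialInv f (some j) with _ | i
    · have hunmatched : ¬∃ i, f i = some j :=
        fun ⟨i, hi⟩ => Option.some_ne_none i ((hinv.mpr hi).symm.trans hj)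
      refine ⟨.inr j, ?_⟩
      rw [diagPenalty_inl_of_eq_none hj, diagPenalty_inr_of_not_exists hunmatched]
    · refine ⟨.inl i, ?_⟩
      rw [diagPenalty_inl_of_eq_some hj, diagPenalty_inl_of_eq_some (hinv.mp hj), abs_sub_comm]
  · refine ⟨.inl i, ?_⟩
    rcases hi : f i with _ | j
    · have hunmatched : ¬∃ j, Function.partialInv f (some j) = some i :=
        fun ⟨j, hj⟩ => Option.some_ne_none j ((hinv.mp hj).symm.trans hi)
      rw [diagPenalty_inr_of_not_exists hunmatched, diagPenalty_inl_of_eq_none hi]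
    · rw [diagPenalty_inr_of_exists ⟨j, hinv.mpr hi⟩, diagPenalty_inl_of_eq_some hi]
      exact abs_nonneg _

theorem bottleneck_eq_of_forall_le_matchCost {c : ℝ}
    (hlower : ∀ f : Fin N → Option (Fin M), IsPartialMatching f → c ≤ matchCost x y f)
    (f₀ : Fin N → Option (Fin M)) (hf₀ : IsPartialMatching f₀) (hupper : matchCost x y f₀ ≤ c) :
    bottleneck x y = c := by
  have : Nonempty {f : Fin N → Option (Fin M) // IsPartialMatching f} :=
    ⟨⟨fun _ => none, fun _ _ _ h => nomatch h⟩⟩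
  have hbdd : BddBelow (Set.range fun f : {f // IsPartialMatching f} => matchCost x y f.1) :=
    ⟨c, Set.forall_mem_range.2 fun f => hlower f.1 f.2⟩
  exact le_antisymm ((ciInf_le hbdd ⟨f₀, hf₀⟩).trans hupper) (le_ciInf fun f => hlower f.1 f.2)

end General

section SameSize

variable {N : ℕ} {x y : Fin N → ℝ}

def identityMatchingExcept (l : Fin N) : Fin N → Option (Fin N) :=
  fun i => if i = l then none else some i

theorem isPartialMatching_identityMatchingExcept (l : Fin N) :
    IsPartialMatching (identityMatchingExcept l) := by
  intro i i' j hi hi'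
  unfold identityMatchingExcept at hi hi'
  split_ifs at hi hi'
  simp_all

theorem matchCost_identityMatchingExcept_le {c : ℝ} (l : Fin N) (hc : 0 ≤ c)
    (hxl : x l / 2 ≤ c) (hyl : y l / 2 ≤ c) (hpairs : ∀ i ≠ l, |x i - y i| ≤ c) :
    matchCost x y (identityMatchingExcept l) ≤ c := by
  refine Real.iSup_le ?_ hc
  rintro (i | j)
  · by_cases hi : i = l
    · subst hi
      rwa [diagPenalty_inl_of_eq_none (by simp [identityMatchingExcept])]
    · rw [diagPenalty_inl_of_eq_some (j := i) (by simp [identityMatchingExcept, hi])]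
      exact hpairs i hi
  · by_cases hj : j = l
    · subst hj
      rwa [diagPenalty_inr_of_not_exists (by simp [identityMatchingExcept])]
    · rw [diagPenalty_inr_of_exists ⟨j, by simp [identityMatchingExcept, hj]⟩]
      exact hc

theorem half_le_matchCost_of_le_half (hx : Antitone x) (hy : Antitone y) {l : Fin N}
    (hyl : y l ≤ x l / 2) {f : Fin N → Option (Fin N)} (hf : IsPartialMatching f) :
    x l / 2 ≤ matchCost x y f := by
  by_contra! hcost
  have hpen (k : Fin N ⊕ Fin N) : diagPenalty x y f k < x l / 2 :=
    (diagPenalty_le_matchCost k).trans_lt hcost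
  have hforced : ∀ i ∈ Iic l, ∃ j ∈ Iio l, f i = some j := by
    intro i hi
    have hxi : x l ≤ x i := hx (mem_Iic.mp hi)
    have hpeni := hpen (.inl i)
    rcases hfi : f i with _ | j
    · rw [diagPenalty_inl_of_eq_none hfi] at hpeni
      linarith
    · rw [diagPenalty_inl_of_eq_some hfi] at hpeni
      refine ⟨j, mem_Iio.mpr ?_, rfl⟩
      by_contra! hlj
      linarith [hy hlj, le_abs_self (x i - y j)]
  have hcard := hf.card_le_of_forall_exists_mem hforced
  rw [Fin.card_Iic, Fin.card_Iio] at hcard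
  omega

theorem max_half_le_matchCost (hx : Antitone x) (hy : Antitone y) {l : Fin N}
    (hl : max (x l) (y l) / 2 ≤ |x l - y l|) {f : Fin N → Option (Fin N)}
    (hf : IsPartialMatching f) : max (x l) (y l) / 2 ≤ matchCost x y f := by
  rcases le_total (y l) (x l) with hyx | hxy
  · rw [max_eq_left hyx, abs_of_nonneg (sub_nonneg.2 hyx)] at hl
    rw [max_eq_left hyx]
    exact half_le_matchCost_of_le_half hx hy (by linarith) hf
  · rw [max_eq_right hxy, abs_of_nonpos (sub_nonpos.2 hxy)] at hl
    rw [max_eq_right hxy]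
    exact (half_le_matchCost_of_le_half hy hx (by linarith) hf.partialInv).trans
      (matchCost_partialInv_le hf)

end SameSize

theorem lumawig_lemma2_case2_general {N : ℕ}
    (x y : Fin N → ℝ)
    (hx : Antitone x) (hy : Antitone y)
    (l : Fin N)
    (hl : |x l - y l| = ⨆ i, |x i - y i|)
    (hζ : (⨆ i : {i : Fin N // i ≠ l}, |x i.1 - y i.1|) < max (x l) (y l) / 2)
    (hmax : max (x l) (y l) / 2 < ⨆ i, |x i - y i|) :
    bottleneck x y = max (x l) (y l) / 2 := by
  have hpairs : ∀ i ≠ l, |x i - y i| ≤ max (x l) (y l) / 2 := fun i hi =>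
    ((le_ciSup (Set.finite_range _).bddAbove ⟨i, hi⟩).trans hζ.le :)
  have hc : 0 ≤ max (x l) (y l) / 2 := (Real.iSup_nonneg fun _ => abs_nonneg _).trans hζ.le
  refine bottleneck_eq_of_forall_le_matchCost
    (fun _ hf => max_half_le_matchCost hx hy (hmax.trans_eq hl.symm).le hf)
    _ (isPartialMatching_identityMatchingExcept l)
    (matchCost_identityMatchingExcept_le l hc ?_ ?_ hpairs)
  · linarith [le_max_left (x l) (y l)]
  · linarith [le_max_right (x l) (y l)]

/-- (Lemma 2, case 2.) For diagrams with the same number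
`N ≥ 2` of points, if `ζ < max (x l) (y l) / 2 < max Z` (where `l` is the
least index achieving `max Z` and `ζ` is the second largest entry of `Z`),
then `d_B(X,Y) = max (x l) (y l) / 2`. -/
theorem lumawig_lemma2_case2 {N : ℕ} (hN : 2 ≤ N)
    (x y : Fin N → ℝ)
    (hx : Antitone x) (hy : Antitone y)
    (hxpos : ∀ i, 0 < x i) (hypos : ∀ i, 0 < y i)
    (l : Fin N)
    (hl : |x l - y l| = ⨆ i, |x i - y i|)
    (hlleast : ∀ i, |x i - y i| = (⨆ j, |x j - y j|) → l ≤ i)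
    (hζ : (⨆ i : {i : Fin N // i ≠ l}, |x i.1 - y i.1|) < max (x l) (y l) / 2)
    (hmax : max (x l) (y l) / 2 < ⨆ i, |x i - y i|) :
    bottleneck x y = max (x l) (y l) / 2 :=
  lumawig_lemma2_case2_general x y hx hy l hl hζ hmax
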